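/- arXiv:2512.12077 — 2 statements merged into one kernel-verified Lean document; each statement's English description precedes it below -/
import Mathlib

section
/- If s ∈ {0,1}^{2t} is uniformly random, then P[greedy_{2t}(s) = ε] = binom(2t, t) · 2^{−2t}. More generally, for k ≠ 0 with k ≡ t (mod 2), P[|greedy_t(s)| = k] = 2 · binom(t, (t+k)/2) · 2^{−t}. -/
/-- One step of the greedy algorithm: shorten the buffer whenever possible. -/
def greedyStep (w : List Bool) (b : Bool) : List Bool :=
  if w.head? = some b then w.tail else w ++ [b]

/-- The greedy algorithm buffer `greedy(s)`. -/
def greedy (s : List Bool) : List Bool := s.foldl greedyStep []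

private def gcount (t k : ℕ) : ℕ :=
  (Finset.univ.filter (fun f : Fin t → Bool => (greedy (List.ofFn f)).length = k)).card

private def dval (t k : ℕ) : ℕ :=
  if (t + k) % 2 = 0 then (if k = 0 then 1 else 2) * Nat.choose t ((t + k) / 2) else 0

private def phi (n k : ℕ) : ℕ :=
  if n = 0 then (if k = 1 then 2 else 0)
  else (if k = n - 1 then 1 else 0) + (if k = n + 1 then 1 else 0)

private lemma ofFn_snoc {t : ℕ} (g : Fin t → Bool) (b : Bool) :
    List.ofFn (Fin.snoc g b) = List.ofFn g ++ [b] := by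
  rw [List.ofFn_succ']
  simp [List.concat_eq_append]

private lemma greedy_append (l : List Bool) (b : Bool) :
    greedy (l ++ [b]) = greedyStep (greedy l) b := by
  simp [greedy, List.foldl_append]

private lemma inner_count (w : List Bool) (k : ℕ) :
    (Finset.univ.filter (fun b : Bool => (greedyStep w b).length = k)).card
      = phi w.length k := by
  rw [Finset.card_filter, Fintype.sum_bool]
  cases w with
  | nil =>
    have h1 : (greedyStep [] true).length = 1 := by simp [greedyStep]
    have h2 : (greedyStep [] false).length = 1 := by simp [greedyStep]
    rw [h1, h2]
    unfold phi
    simp only [List.length_nil]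
    split_ifs <;> first | omega | exact ‹False›.elim
  | cons x xs =>
    have h1 : (greedyStep (x :: xs) x).length = xs.length := by simp [greedyStep]
    have h2 : (greedyStep (x :: xs) (!x)).length = xs.length + 2 := by
      simp [greedyStep]
    cases x
    · rw [h1, show true = !false from rfl, h2]
      unfold phi
      simp only [List.length_cons]
      split_ifs <;> first | omega | exact ‹False›.elim
    · rw [h1, show false = !true from rfl, h2]
      unfold phi
      simp only [List.length_cons]
      split_ifs <;> first | omega | exact ‹False›.elim

private lemma gcount_succ (t k : ℕ) :
    gcount (t + 1) k = ∑ g : Fin t → Bool, phi (greedy (List.ofFn g)).length k := by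
  rw [gcount, Finset.card_filter]
  rw [← Fintype.sum_equiv (Fin.snocEquiv (fun _ => Bool))
      (fun p : Bool × (Fin t → Bool) =>
        if (greedy (List.ofFn (Fin.snoc p.2 p.1))).length = k then 1 else 0)
      (fun f : Fin (t + 1) → Bool => if (greedy (List.ofFn f)).length = k then 1 else 0)
      (fun p => rfl)]
  rw [Fintype.sum_prod_type]
  rw [Finset.sum_comm]
  refine Finset.sum_congr rfl fun g _ => ?_
  rw [← inner_count (greedy (List.ofFn g)) k, Finset.card_filter]
  refine Finset.sum_congr rfl fun b _ => ?_
  rw [ofFn_snoc, greedy_append]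

private lemma sum_indicator (t j : ℕ) :
    (∑ g : Fin t → Bool, if (greedy (List.ofFn g)).length = j then 1 else 0) = gcount t j := by
  rw [gcount, Finset.card_filter]

private lemma rec0 (t : ℕ) : gcount (t + 1) 0 = gcount t 1 := by
  rw [gcount_succ, ← sum_indicator]
  refine Finset.sum_congr rfl fun g _ => ?_
  unfold phi
  split_ifs <;> first | omega | exact ‹False›.elim

private lemma rec1 (t : ℕ) : gcount (t + 1) 1 = 2 * gcount t 0 + gcount t 2 := by
  rw [gcount_succ, ← sum_indicator, ← sum_indicator, Finset.mul_sum, ← Finset.sum_add_distrib]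
  refine Finset.sum_congr rfl fun g _ => ?_
  unfold phi
  split_ifs <;> first | omega | exact ‹False›.elim

private lemma rec2 (t k : ℕ) :
    gcount (t + 1) (k + 2) = gcount t (k + 1) + gcount t (k + 3) := by
  rw [gcount_succ, ← sum_indicator, ← sum_indicator, ← Finset.sum_add_distrib]
  refine Finset.sum_congr rfl fun g _ => ?_
  unfold phi
  split_ifs <;> first | omega | exact ‹False›.elim

private lemma dval0 (t : ℕ) : dval (t + 1) 0 = dval t 1 := by
  unfold dval
  rcases Nat.even_or_odd t with h | h
  · rw [Nat.even_iff] at h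
    have e1 : (t + 1 + 0) % 2 = 1 := by omega
    have e2 : (t + 1) % 2 = 1 := by omega
    simp only [e1, e2]
    norm_num
  · rw [Nat.odd_iff] at h
    obtain ⟨q, hq⟩ : ∃ q, t = 2 * q + 1 := ⟨t / 2, by omega⟩
    subst hq
    have e1 : (2 * q + 1 + 1 + 0) % 2 = 0 := by omega
    have e2 : (2 * q + 1 + 1) % 2 = 0 := by omega
    have e3 : (2 * q + 1 + 1 + 0) / 2 = q + 1 := by omega
    have e4 : (2 * q + 1 + 1) / 2 = q + 1 := by omega
    simp only [e1, e2, e3, e4]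
    norm_num
    have hp : (2 * q + 1 + 1).choose (q + 1)
        = (2 * q + 1).choose q + (2 * q + 1).choose (q + 1) := Nat.choose_succ_succ _ _
    have h5 := Nat.choose_symm (n := 2 * q + 1) (k := q + 1) (by omega)
    have he : 2 * q + 1 - (q + 1) = q := by omega
    rw [he] at h5
    omega

private lemma dval1 (t : ℕ) : dval (t + 1) 1 = 2 * dval t 0 + dval t 2 := by
  unfold dval
  rcases Nat.even_or_odd t with h | h
  · rw [Nat.even_iff] at h
    obtain ⟨q, hq⟩ : ∃ q, t = 2 * q := ⟨t / 2, by omega⟩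
    subst hq
    have e1 : (2 * q + 1 + 1) % 2 = 0 := by omega
    have e2 : (2 * q + 0) % 2 = 0 := by omega
    have e3 : (2 * q + 2) % 2 = 0 := by omega
    have e4 : (2 * q + 1 + 1) / 2 = q + 1 := by omega
    have e5 : (2 * q + 0) / 2 = q := by omega
    have e6 : (2 * q + 2) / 2 = q + 1 := by omega
    simp only [e1, e2, e3, e4, e5, e6]
    norm_num
    have hp : (2 * q + 1).choose (q + 1) = (2 * q).choose q + (2 * q).choose (q + 1) :=
      Nat.choose_succ_succ _ _
    omega
  · rw [Nat.odd_iff] at h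
    have e1 : (t + 1 + 1) % 2 = 1 := by omega
    have e2 : (t + 0) % 2 = 1 := by omega
    have e3 : (t + 2) % 2 = 1 := by omega
    simp only [e1, e2, e3]
    norm_num

private lemma dval2 (t k : ℕ) : dval (t + 1) (k + 2) = dval t (k + 1) + dval t (k + 3) := by
  unfold dval
  rcases Nat.even_or_odd (t + k) with h | h
  · rw [Nat.even_iff] at h
    have e1 : (t + 1 + (k + 2)) % 2 = 1 := by omega
    have e2 : (t + (k + 1)) % 2 = 1 := by omega
    have e3 : (t + (k + 3)) % 2 = 1 := by omega
    simp only [e1, e2, e3]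
    norm_num
  · rw [Nat.odd_iff] at h
    obtain ⟨q, hq⟩ : ∃ q, t + k = 2 * q + 1 := ⟨(t + k) / 2, by omega⟩
    have e1 : (t + 1 + (k + 2)) % 2 = 0 := by omega
    have e2 : (t + (k + 1)) % 2 = 0 := by omega
    have e3 : (t + (k + 3)) % 2 = 0 := by omega
    have e4 : (t + 1 + (k + 2)) / 2 = q + 2 := by omega
    have e5 : (t + (k + 1)) / 2 = q + 1 := by omega
    have e6 : (t + (k + 3)) / 2 = q + 2 := by omega
    simp only [e1, e2, e3, e4, e5, e6]
    norm_num [Nat.add_eq_zero]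
    have hp : (t + 1).choose (q + 2) = t.choose (q + 1) + t.choose (q + 2) :=
      Nat.choose_succ_succ _ _
    omega

private lemma gcount_eq (t : ℕ) : ∀ k, gcount t k = dval t k := by
  induction t with
  | zero =>
    intro k
    have h0 : gcount 0 k = if k = 0 then 1 else 0 := by
      rw [gcount, Finset.card_filter]
      rw [Fintype.sum_unique]
      simp [greedy, eq_comm]
    rw [h0]
    unfold dval
    rcases Nat.eq_zero_or_pos k with hk | hk
    · subst hk; simp
    · have hne : k ≠ 0 := by omega
      simp only [hne, if_false, Nat.zero_add]
      by_cases hp : k % 2 = 0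
      · have hc : Nat.choose 0 (k / 2) = 0 := Nat.choose_eq_zero_of_lt (by omega)
        simp [hp, hc]
      · simp [hp]
  | succ t ih =>
    intro k
    match k with
    | 0 => rw [rec0, ih, dval0]
    | 1 => rw [rec1, ih, ih, dval1]
    | (k + 2) => rw [rec2, ih, ih, dval2]

/-- for uniformly random `s ∈ {0,1}^{2t}`,
`P[greedy_{2t}(s) = ε] = C(2t,t)·2^{-2t}`; and for `k ≠ 0` with `k ≡ t (mod 2)`,
for uniformly random `s ∈ {0,1}^t`, `P[|greedy_t(s)| = k] = 2·C(t,(t+k)/2)·2^{-t}`. -/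
theorem greedy_return_probabilities (t : ℕ) :
    ({f : Fin (2 * t) → Bool | greedy (List.ofFn f) = []}.ncard : ℝ) / 2 ^ (2 * t)
      = (Nat.choose (2 * t) t : ℝ) / 2 ^ (2 * t) ∧
    ∀ k : ℕ, k ≠ 0 → k % 2 = t % 2 →
      ({f : Fin t → Bool | (greedy (List.ofFn f)).length = k}.ncard : ℝ) / 2 ^ t
        = 2 * (Nat.choose t ((t + k) / 2) : ℝ) / 2 ^ t := by
  constructor
  · have hset : {f : Fin (2 * t) → Bool | greedy (List.ofFn f) = []}
        = ↑(Finset.univ.filter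
            (fun f : Fin (2 * t) → Bool => (greedy (List.ofFn f)).length = 0)) := by
      ext f
      simp [List.length_eq_zero_iff]
    rw [hset, Set.ncard_coe_finset]
    have hc : (Finset.univ.filter
        (fun f : Fin (2 * t) → Bool => (greedy (List.ofFn f)).length = 0)).card
        = Nat.choose (2 * t) t := by
      have h := gcount_eq (2 * t) 0
      rw [gcount] at h
      rw [h]
      unfold dval
      have h1 : (2 * t + 0) % 2 = 0 := by omega
      have h2 : (2 * t + 0) / 2 = t := by omega
      simp [h1, h2]
    rw [hc]
  · intro k hk hpar
    have hset : {f : Fin t → Bool | (greedy (List.ofFn f)).length = k}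
        = ↑(Finset.univ.filter
            (fun f : Fin t → Bool => (greedy (List.ofFn f)).length = k)) := by
      ext f; simp
    rw [hset, Set.ncard_coe_finset]
    have hc : (Finset.univ.filter
        (fun f : Fin t → Bool => (greedy (List.ofFn f)).length = k)).card
        = 2 * Nat.choose t ((t + k) / 2) := by
      have h := gcount_eq t k
      rw [gcount] at h
      rw [h]
      unfold dval
      have h1 : (t + k) % 2 = 0 := by omega
      simp [h1, hk]
    rw [hc]
    push_cast
    ring
end

section
/- For all words w ∈ Σ_2 with |w| = k ≥ 3 and all t with t + k even, the greedy probabilities satisfy q_t(k−2)/(2(k−2)) ≥ q_t(w) ≥ q_t(k+2)/(2(k+2)). -/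
/-- Binary words with at most two runs: `0^a 1^b` or `1^a 0^b`. -/
def Sigma2 : Set (List Bool) :=
  {w | ∃ a b : ℕ, w = List.replicate a false ++ List.replicate b true ∨
      w = List.replicate a true ++ List.replicate b false}
/-- `q t w`: probability that the greedy buffer at time `t` equals `w`,
for a uniformly random binary word of length `t`. -/
noncomputable def q (t : ℕ) (w : List Bool) : ℝ :=
  ({f : Fin t → Bool | greedy (List.ofFn f) = w}.ncard : ℝ) / 2 ^ t

/-- `qlen t m`: probability that the greedy buffer at time `t` has length `m`. -/
noncomputable def qlen (t m : ℕ) : ℝ :=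
  ({f : Fin t → Bool | (greedy (List.ofFn f)).length = m}.ncard : ℝ) / 2 ^ t

/-!
Write `n_t(a, b)` for the number of inputs of length `t` whose greedy buffer is `x^a y^b`
(`y = ¬x`); complementing the input shows that it does not depend on `x`, and every buffer has
at most two runs. Reading one more letter gives
`n_{t+1}(a+1, b+1) = n_t(a+2, b+1) + n_t(a+1, b)`, because the third candidate predecessor
`y x^{a+1} y^{b+1}` has three runs, and `n_{t+1}(a+1, 0) = n_t(a+2, 0) + n_t(1, a+1)`, plus
`n_t(0, 0)` when `a = 0`. A joint induction on `t` shows that moving a letter from the first run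
to the second never decreases `n_t`, and that `n_t(1, k+1) ≤ n_t(k, 0)`. So every two-run word of
length `k + 2` is at most as likely as every two-run word of length `k`, and since there are `2m`
two-run words of length `m`, averaging over them gives both inequalities.
-/

open Finset

def twoRun (x : Bool) (a b : ℕ) : List Bool :=
  List.replicate a x ++ List.replicate b (!x)

section twoRun

variable (x : Bool) (a b : ℕ)

@[simp] lemma length_twoRun : (twoRun x a b).length = a + b := by simp [twoRun]

lemma twoRun_zero_left : twoRun x 0 b = twoRun (!x) b 0 := by simp [twoRun]

@[simp] lemma twoRun_zero_zero : twoRun x 0 0 = [] := rfl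

lemma cons_twoRun : x :: twoRun x a b = twoRun x (a + 1) b := by
  simp [twoRun, List.replicate_succ]

lemma twoRun_append_not : twoRun x a b ++ [!x] = twoRun x a (b + 1) := by
  simp [twoRun, List.replicate_succ']

lemma twoRun_succ_zero : twoRun x (a + 1) 0 = twoRun x a 0 ++ [x] := by
  simp [twoRun, List.replicate_succ']

lemma not_cons_twoRun_zero : (!x) :: twoRun x a 0 = twoRun (!x) 1 a := by
  simp [twoRun]

@[simp] lemma head?_twoRun_succ : (twoRun x (a + 1) b).head? = some x := by
  simp [twoRun, List.replicate_succ]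

@[simp] lemma tail_twoRun_succ : (twoRun x (a + 1) b).tail = twoRun x a b := by
  simp [twoRun, List.replicate_succ]

@[simp] lemma count_self_twoRun : (twoRun x a b).count x = a := by
  simp [twoRun, List.count_replicate]

@[simp] lemma count_not_twoRun : (twoRun x a b).count (!x) = b := by
  simp [twoRun, List.count_replicate]

@[simp] lemma map_not_twoRun : (twoRun x a b).map not = twoRun (!x) a b := by
  simp [twoRun]

end twoRun

lemma mem_Sigma2_iff {w : List Bool} : w ∈ Sigma2 ↔ ∃ x a b, w = twoRun x a b := by
  simp [Sigma2, twoRun, Bool.exists_bool, or_comm, exists_or]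

lemma Sigma2_cases {w : List Bool} (hw : w ∈ Sigma2) :
    w = [] ∨ ∃ x a b, w = twoRun x (a + 1) b := by
  obtain ⟨x, a, b, rfl⟩ := mem_Sigma2_iff.1 hw
  match a, b with
  | 0, 0 => exact .inl rfl
  | 0, b + 1 => exact .inr ⟨!x, b, 0, twoRun_zero_left x _⟩
  | a + 1, b => exact .inr ⟨x, a, b, rfl⟩

lemma twoRun_mem_Sigma2 (x : Bool) (a b : ℕ) : twoRun x a b ∈ Sigma2 :=
  mem_Sigma2_iff.2 ⟨x, a, b, rfl⟩

lemma not_cons_twoRun_notMem_Sigma2 (x : Bool) (a b : ℕ) :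
    (!x) :: twoRun x (a + 1) (b + 1) ∉ Sigma2 := by
  intro hw
  obtain ⟨z, c, d, h⟩ := (Sigma2_cases hw).resolve_left (List.cons_ne_nil _ _)
  rw [← cons_twoRun z, List.cons.injEq] at h
  obtain ⟨rfl, h⟩ := h
  have hc : c = b + 1 := by simpa using congrArg (List.count (!x)) h.symm
  simpa [hc] using congrArg List.head? h

lemma greedy_append_singleton (s : List Bool) (c : Bool) :
    greedy (s ++ [c]) = greedyStep (greedy s) c := by
  simp [greedy]

lemma greedyStep_eq_iff {v w : List Bool} {c : Bool} :
    greedyStep v c = w ↔ v = c :: w ∨ (v.head? ≠ some c ∧ v ++ [c] = w) := by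
  unfold greedyStep
  split_ifs with h
  · cases v with
    | nil => simp at h
    | cons d v => simp_all [eq_comm]
  · aesop

lemma greedy_mem_Sigma2 (s : List Bool) : greedy s ∈ Sigma2 := by
  induction s using List.reverseRecOn with
  | nil => exact twoRun_mem_Sigma2 false 0 0
  | append_singleton s c ih =>
    rw [greedy_append_singleton]
    rcases Sigma2_cases ih with h | ⟨x, a, b, h⟩
    · rw [h]
      exact twoRun_mem_Sigma2 c 1 0
    · rw [h]
      rcases Bool.eq_or_eq_not c x with rfl | rfl
      · simpa [greedyStep] using twoRun_mem_Sigma2 c a b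
      · simpa [greedyStep, twoRun_append_not] using twoRun_mem_Sigma2 x (a + 1) (b + 1)

lemma greedy_map_not (s : List Bool) : greedy (s.map not) = (greedy s).map not := by
  induction s using List.reverseRecOn with
  | nil => rfl
  | append_singleton s c ih =>
    rw [List.map_append, List.map_singleton, greedy_append_singleton, greedy_append_singleton, ih]
    unfold greedyStep
    cases greedy s with
    | nil => simp
    | cons d v => cases d <;> cases c <;> simp

def greedyCount (t : ℕ) (w : List Bool) : ℕ :=
  #{f : Fin t → Bool | greedy (List.ofFn f) = w}

lemma card_filter_greedy_mem (t : ℕ) (P : Finset (List Bool)) :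
    #{f : Fin t → Bool | greedy (List.ofFn f) ∈ P} = ∑ v ∈ P, greedyCount t v := by
  rw [card_eq_sum_card_fiberwise (f := fun f => greedy (List.ofFn f)) (t := P)
    fun f hf => by simpa using hf]
  refine sum_congr rfl fun v hv => ?_
  rw [greedyCount, filter_filter]
  congr 1
  exact filter_congr fun f _ => ⟨fun h => h.2, fun h => ⟨h ▸ hv, h⟩⟩

lemma greedyCount_succ (t : ℕ) (w : List Bool) :
    greedyCount (t + 1) w =
      ∑ d, #{f : Fin t → Bool | greedyStep (greedy (List.ofFn f)) d = w} := by
  simp only [greedyCount, card_filter]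
  rw [← (Fin.snocEquiv fun _ => Bool).sum_comp, Fintype.sum_prod_type]
  refine sum_congr rfl fun d _ => ?_
  refine sum_congr rfl fun f _ => ?_
  simp only [Fin.snocEquiv_apply, List.ofFn_succ', Fin.snoc_castSucc, Fin.snoc_last,
    List.concat_eq_append, greedy_append_singleton]

lemma greedyCount_succ_append_singleton (t : ℕ) (u : List Bool) (c : Bool) :
    greedyCount (t + 1) (u ++ [c]) = greedyCount t (c :: (u ++ [c])) +
      greedyCount t ((!c) :: (u ++ [c])) + if u.head? = some c then 0 else greedyCount t u := by
  have sum_bool : ∀ F : Bool → ℕ, ∑ d, F d = F c + F (!c) := by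
    cases c <;> simp [add_comm]
  have pre_same : ∀ v, greedyStep v c = u ++ [c] ↔
      v ∈ (if u.head? = some c then {c :: (u ++ [c])} else {c :: (u ++ [c]), u} :
        Finset (List Bool)) := by
    intro v
    rw [greedyStep_eq_iff]
    split_ifs with h <;> simp only [mem_singleton, mem_insert, List.append_cancel_right_eq]
    · exact or_iff_left_of_imp fun ⟨hne, hv⟩ => absurd (hv ▸ h) hne
    · exact or_congr_right ⟨And.right, fun hv => ⟨hv ▸ h, hv⟩⟩
  have pre_not : ∀ v, greedyStep v (!c) = u ++ [c] ↔ v ∈ ({(!c) :: (u ++ [c])} : Finset _) := by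
    intro v
    rw [greedyStep_eq_iff]
    simp
  rw [greedyCount_succ, sum_bool, filter_congr fun f _ => pre_same (greedy (List.ofFn f)),
    filter_congr fun f _ => pre_not (greedy (List.ofFn f)), card_filter_greedy_mem,
    card_filter_greedy_mem]
  split_ifs
  · simp
  · rw [sum_pair fun h => by have := congrArg List.length h; grind, sum_singleton]
    ring

lemma greedyCount_eq_zero_of_notMem {w : List Bool} (hw : w ∉ Sigma2) (t : ℕ) :
    greedyCount t w = 0 := by
  rw [greedyCount, card_eq_zero, filter_eq_empty_iff]
  exact fun f _ h => hw (h ▸ greedy_mem_Sigma2 _)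

lemma greedyCount_map_not (t : ℕ) (w : List Bool) :
    greedyCount t (w.map not) = greedyCount t w := by
  have greedy_not (f : Fin t → Bool) :
      greedy (List.ofFn (not ∘ f)) = (greedy (List.ofFn f)).map not := by
    rw [← List.map_ofFn, greedy_map_not]
  refine card_nbij' (not ∘ ·) (not ∘ ·) ?_ ?_ ?_ ?_ <;> intro f hf <;>
    simp_all only [coe_filter, mem_univ, true_and, Set.mem_ofPred_eq, List.map_map] <;>
    simp [Function.comp_def]

lemma greedyCount_zero {w : List Bool} (hw : w ≠ []) : greedyCount 0 w = 0 := by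
  simp [greedyCount, greedy, hw.symm]

lemma q_eq_greedyCount (t : ℕ) (w : List Bool) : q t w = greedyCount t w / 2 ^ t := by
  rw [q, greedyCount, ← Set.ncard_coe_finset, coe_filter]
  simp

def runCount (t a b : ℕ) : ℕ := greedyCount t (twoRun false a b)

lemma greedyCount_twoRun (t : ℕ) (x : Bool) (a b : ℕ) :
    greedyCount t (twoRun x a b) = runCount t a b := by
  cases x
  · rfl
  · rw [runCount, ← greedyCount_map_not, map_not_twoRun, Bool.not_true]

lemma runCount_succ_mixed (t a b : ℕ) :
    runCount (t + 1) (a + 1) (b + 1) = runCount t (a + 2) (b + 1) + runCount t (a + 1) b := by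
  rw [runCount, ← twoRun_append_not, greedyCount_succ_append_singleton, twoRun_append_not,
    greedyCount_eq_zero_of_notMem (not_cons_twoRun_notMem_Sigma2 _ _ _), Bool.not_not,
    cons_twoRun, head?_twoRun_succ]
  simp only [greedyCount_twoRun]
  simp

lemma runCount_succ_const (t a : ℕ) :
    runCount (t + 1) (a + 1) 0 =
      runCount t (a + 2) 0 + runCount t 1 (a + 1) + if a = 0 then runCount t 0 0 else 0 := by
  rw [runCount, twoRun_succ_zero, greedyCount_succ_append_singleton, ← twoRun_succ_zero,
    cons_twoRun, not_cons_twoRun_zero]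
  simp only [greedyCount_twoRun]
  cases a <;> simp

lemma runCount_zero_eq_zero {a b : ℕ} (h : 0 < a + b) : runCount 0 a b = 0 :=
  greedyCount_zero fun hw => h.ne' (by simpa using congrArg List.length hw)

-- The two inequalities are proved together: the induction step for each uses both.
lemma runCount_mono (t : ℕ) :
    (∀ a b, runCount t (a + 2) b ≤ runCount t (a + 1) (b + 1)) ∧
      ∀ k, runCount t 1 (k + 2) ≤ runCount t (k + 1) 0 := by
  induction t with
  | zero => simp [runCount_zero_eq_zero]
  | succ t ih =>
    obtain ⟨hA, hB⟩ := ih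
    refine ⟨fun a b => ?_, fun k => ?_⟩
    · cases b with
      | zero =>
        rw [runCount_succ_const, runCount_succ_mixed, if_neg a.succ_ne_zero, add_zero]
        exact add_le_add (hA (a + 1) 0) (hB a)
      | succ b =>
        rw [runCount_succ_mixed, runCount_succ_mixed]
        exact add_le_add (hA (a + 1) (b + 1)) (hA a b)
    · calc runCount (t + 1) 1 (k + 2) = runCount t 2 (k + 2) + runCount t 1 (k + 1) :=
            runCount_succ_mixed t 0 (k + 1)
        _ ≤ runCount t (k + 2) 0 + runCount t 1 (k + 1) :=
            Nat.add_le_add_right ((hA 0 (k + 2)).trans (hB (k + 1))) _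
        _ ≤ runCount (t + 1) (k + 1) 0 := by
            rw [runCount_succ_const]; exact Nat.le_add_right _ _

lemma runCount_const_le (t a b : ℕ) : runCount t (a + 1 + b) 0 ≤ runCount t (a + 1) b := by
  induction b generalizing a with
  | zero => rfl
  | succ b ih =>
    calc runCount t (a + 1 + (b + 1)) 0 = runCount t (a + 1 + 1 + b) 0 := by ring_nf
      _ ≤ runCount t (a + 2) b := ih (a + 1)
      _ ≤ runCount t (a + 1) (b + 1) := (runCount_mono t).1 a b

lemma runCount_le_one_left (t a b : ℕ) : runCount t (a + 1) b ≤ runCount t 1 (a + b) := by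
  induction a generalizing b with
  | zero => simp
  | succ a ih =>
    calc runCount t (a + 2) b ≤ runCount t (a + 1) (b + 1) := (runCount_mono t).1 a b
      _ ≤ runCount t 1 (a + (b + 1)) := ih (b + 1)
      _ = runCount t 1 (a + 1 + b) := by ring_nf

lemma runCount_le_of_add_eq_add_two (t : ℕ) {a b c d : ℕ} (h : c + d = a + b + 2) :
    runCount t (c + 1) d ≤ runCount t (a + 1) b :=
  calc runCount t (c + 1) d ≤ runCount t 1 (a + b + 2) := h ▸ runCount_le_one_left t c d
    _ ≤ runCount t (a + b + 1) 0 := (runCount_mono t).2 (a + b)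
    _ = runCount t (a + 1 + b) 0 := by ring_nf
    _ ≤ runCount t (a + 1) b := runCount_const_le t a b

def twoRuns (n : ℕ) : Finset (List Bool) :=
  (univ ×ˢ antidiagonal n).image fun p => twoRun p.1 (p.2.1 + 1) p.2.2

lemma mem_twoRuns {n : ℕ} {w : List Bool} :
    w ∈ twoRuns n ↔ ∃ x a b, a + b = n ∧ twoRun x (a + 1) b = w := by
  simp only [twoRuns, mem_image, mem_product, mem_univ, true_and,
    HasAntidiagonal.mem_antidiagonal, Prod.exists]

lemma mem_twoRuns_iff {n : ℕ} {w : List Bool} :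
    w ∈ twoRuns n ↔ w ∈ Sigma2 ∧ w.length = n + 1 := by
  rw [mem_twoRuns]
  constructor
  · rintro ⟨x, a, b, rfl, rfl⟩
    exact ⟨twoRun_mem_Sigma2 _ _ _, by simp [add_right_comm]⟩
  · rintro ⟨hw, hlen⟩
    obtain ⟨x, a, b, rfl⟩ := (Sigma2_cases hw).resolve_left (by rintro rfl; simp at hlen)
    exact ⟨x, a, b, by simpa [add_right_comm] using hlen, rfl⟩

lemma card_twoRuns (n : ℕ) : #(twoRuns n) = 2 * (n + 1) := by
  rw [twoRuns, card_image_of_injective, card_product, card_univ, Fintype.card_bool,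
    Nat.card_antidiagonal]
  rintro ⟨x, a, b⟩ ⟨y, c, d⟩ h
  obtain rfl : x = y := by simpa using congrArg List.head? h
  have hac : a = c := by simpa using congrArg (List.count x) h
  have hbd : b = d := by simpa using congrArg (List.count (!x)) h
  rw [hac, hbd]

lemma q_le_q_of_mem_twoRuns (t : ℕ) {n : ℕ} {v w : List Bool} (hv : v ∈ twoRuns n)
    (hw : w ∈ twoRuns (n + 2)) : q t w ≤ q t v := by
  obtain ⟨x, a, b, rfl, rfl⟩ := mem_twoRuns.1 hv
  obtain ⟨y, c, d, hcd, rfl⟩ := mem_twoRuns.1 hw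
  rw [q_eq_greedyCount, q_eq_greedyCount, greedyCount_twoRun, greedyCount_twoRun]
  gcongr
  exact runCount_le_of_add_eq_add_two t (by omega)

lemma qlen_succ_eq_sum (t n : ℕ) : qlen t (n + 1) = ∑ v ∈ twoRuns n, q t v := by
  have hlen : #{f : Fin t → Bool | (greedy (List.ofFn f)).length = n + 1} =
      ∑ v ∈ twoRuns n, greedyCount t v := by
    rw [← card_filter_greedy_mem]
    exact congrArg card (filter_congr fun f _ => by simp [mem_twoRuns_iff, greedy_mem_Sigma2])
  simp only [qlen, q_eq_greedyCount, ← sum_div, ← Nat.cast_sum, ← hlen, ← Set.ncard_coe_finset,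
    coe_filter]
  simp

lemma two_mul_q_le_qlen (t : ℕ) {n : ℕ} {w : List Bool} (hw : w ∈ twoRuns (n + 2)) :
    2 * (n + 1) * q t w ≤ qlen t (n + 1) := by
  rw [qlen_succ_eq_sum]
  refine le_of_eq_of_le ?_ (card_nsmul_le_sum _ _ _ fun v hv => q_le_q_of_mem_twoRuns t hv hw)
  rw [card_twoRuns, nsmul_eq_mul]
  push_cast
  ring

lemma qlen_le_two_mul_q (t : ℕ) {n : ℕ} {w : List Bool} (hw : w ∈ twoRuns n) :
    qlen t (n + 3) ≤ 2 * (n + 3) * q t w := by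
  rw [qlen_succ_eq_sum]
  refine (sum_le_card_nsmul _ _ _ fun v hv => q_le_q_of_mem_twoRuns t hw hv).trans_eq ?_
  rw [card_twoRuns, nsmul_eq_mul]
  push_cast
  ring

theorem greedy_q_uniform_general (t k : ℕ) (w : List Bool) (hw : w ∈ Sigma2)
    (hlen : w.length = k) (hk : 3 ≤ k) :
    q t w ≤ qlen t (k - 2) / (2 * ((k : ℝ) - 2)) ∧
    qlen t (k + 2) / (2 * ((k : ℝ) + 2)) ≤ q t w := by
  obtain ⟨n, rfl⟩ := Nat.exists_eq_add_of_le' hk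
  have hw' : w ∈ twoRuns (n + 2) := mem_twoRuns_iff.2 ⟨hw, hlen⟩
  have hsub : ((n + 3 : ℕ) : ℝ) - 2 = n + 1 := by push_cast; ring
  constructor
  · rw [hsub, le_div_iff₀ (by positivity), mul_comm]
    exact two_mul_q_le_qlen t hw'
  · rw [div_le_iff₀ (by positivity)]
    exact (qlen_le_two_mul_q t hw').trans_eq (by push_cast; ring)

/-- for `w ∈ Σ₂` with `|w| = k ≥ 3` and `t + k` even,
`q_t(k-2)/(2(k-2)) ≥ q_t(w) ≥ q_t(k+2)/(2(k+2))`. -/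
theorem greedy_q_uniform (t k : ℕ) (w : List Bool) (hw : w ∈ Sigma2)
    (hlen : w.length = k) (hk : 3 ≤ k) (hpar : (t + k) % 2 = 0) :
    q t w ≤ qlen t (k - 2) / (2 * ((k : ℝ) - 2)) ∧
    qlen t (k + 2) / (2 * ((k : ℝ) + 2)) ≤ q t w :=
  greedy_q_uniform_general t k w hw hlen hk
end
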